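/- arXiv:1810.09283 — 12 statements merged into one kernel-verified Lean document; each statement's English description precedes it below -/
import Mathlib

section
/- Let k = (k1, k2, k3) ∈ ℤ³ with k3 ≠ 0, let C > 0 be a real number, and let q = (q1, q2, q3) ∈ ℚ³ \ {0} satisfy |q1| ≤ C·|q2| and |q3| ≤ C·|q2|. If there exists m ∈ ℤ with (k1, k2, k3) = (m·q1, m·q2, m·q3) (as rationals), then |M̂₁(k)| ≤ C + C² + 2C³. -/
/-- The first magneto-geostrophic symbol `M̂₁(k)`. -/
noncomputable def Mhat1 (k1 k2 k3 : ℤ) : ℝ :=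
  if k3 = 0 then 0
  else ((k2 * k3 * (k1 ^ 2 + k2 ^ 2 + k3 ^ 2) - k1 * k2 ^ 2 * k3 : ℤ) : ℝ) /
    ((k3 ^ 2 * (k1 ^ 2 + k2 ^ 2 + k3 ^ 2) + k2 ^ 4 : ℤ) : ℝ)

/-- The second magneto-geostrophic symbol `M̂₂(k)`. -/
noncomputable def Mhat2 (k1 k2 k3 : ℤ) : ℝ :=
  if k3 = 0 then 0
  else ((-(k1 * k3 * (k1 ^ 2 + k2 ^ 2 + k3 ^ 2)) - k2 ^ 3 * k3 : ℤ) : ℝ) /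
    ((k3 ^ 2 * (k1 ^ 2 + k2 ^ 2 + k3 ^ 2) + k2 ^ 4 : ℤ) : ℝ)

/-- The third magneto-geostrophic symbol `M̂₃(k)`. -/
noncomputable def Mhat3 (k1 k2 k3 : ℤ) : ℝ :=
  if k3 = 0 then 0
  else ((k2 ^ 2 * (k1 ^ 2 + k2 ^ 2) : ℤ) : ℝ) /
    ((k3 ^ 2 * (k1 ^ 2 + k2 ^ 2 + k3 ^ 2) + k2 ^ 4 : ℤ) : ℝ)

/-- The rational cone `K_C`: nonzero `q ∈ ℚ³` with `|q1| ≤ C|q2|` and `|q3| ≤ C|q2|`. -/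
def Kcone (C : ℝ) (q : ℚ × ℚ × ℚ) : Prop :=
  q ≠ 0 ∧ ((|q.1| : ℚ) : ℝ) ≤ C * ((|q.2.1| : ℚ) : ℝ) ∧
    ((|q.2.2| : ℚ) : ℝ) ≤ C * ((|q.2.1| : ℚ) : ℝ)

/-- The frequency line `L(q)`: integer points `k` that are integer multiples of `q`. -/
def Lline (q : ℚ × ℚ × ℚ) (k : ℤ × ℤ × ℤ) : Prop :=
  ∃ m : ℤ, (k.1 : ℚ) = m * q.1 ∧ (k.2.1 : ℚ) = m * q.2.1 ∧ (k.2.2 : ℚ) = m * q.2.2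

/-- bound for `M̂₁` on frequency lines in the cone `K_C`. -/
theorem Mhat1_bound_on_line (k1 k2 k3 : ℤ) (hk3 : k3 ≠ 0) (C : ℝ) (hC : 0 < C)
    (q1 q2 q3 : ℚ) (hq : (q1, q2, q3) ≠ (0, 0, 0))
    (h1 : ((|q1| : ℚ) : ℝ) ≤ C * ((|q2| : ℚ) : ℝ))
    (h3 : ((|q3| : ℚ) : ℝ) ≤ C * ((|q2| : ℚ) : ℝ))
    (hline : ∃ m : ℤ, (k1 : ℚ) = m * q1 ∧ (k2 : ℚ) = m * q2 ∧ (k3 : ℚ) = m * q3) :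
    |Mhat1 k1 k2 k3| ≤ C + C ^ 2 + 2 * C ^ 3 := by
  obtain ⟨m, e1, e2, e3⟩ := hline
  have hm : (m : ℚ) ≠ 0 := by
    intro h
    apply hk3
    have : (k3 : ℚ) = 0 := by rw [e3, h, zero_mul]
    exact_mod_cast this
  have hq2 : q2 ≠ 0 := by
    intro h
    have h0 : ((|q3| : ℚ) : ℝ) ≤ 0 := by simpa [h] using h3
    have h0' : (0 : ℝ) ≤ ((|q3| : ℚ) : ℝ) := by positivity
    have hq3 : |q3| = (0 : ℚ) := by exact_mod_cast le_antisymm h0 h0'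
    have hq3' : q3 = 0 := abs_eq_zero.mp hq3
    apply hk3
    have : (k3 : ℚ) = 0 := by rw [e3, hq3', mul_zero]
    exact_mod_cast this
  have hk2 : k2 ≠ 0 := by
    intro h
    have : (m : ℚ) * q2 = 0 := by rw [← e2, h]; simp
    rcases mul_eq_zero.mp this with h' | h'
    · exact hm h'
    · exact hq2 h'
  have e1r : (k1 : ℝ) = (m : ℝ) * (q1 : ℝ) := by exact_mod_cast e1
  have e2r : (k2 : ℝ) = (m : ℝ) * (q2 : ℝ) := by exact_mod_cast e2
  have e3r : (k3 : ℝ) = (m : ℝ) * (q3 : ℝ) := by exact_mod_cast e3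
  push_cast at h1 h3
  have haC' : |(k1:ℝ)| ≤ C * |(k2:ℝ)| := by
    rw [e1r, e2r, abs_mul, abs_mul]
    calc |(m:ℝ)| * |(q1:ℝ)| ≤ |(m:ℝ)| * (C * |(q2:ℝ)|) :=
          mul_le_mul_of_nonneg_left h1 (abs_nonneg _)
      _ = C * (|(m:ℝ)| * |(q2:ℝ)|) := by ring
  have hcC' : |(k3:ℝ)| ≤ C * |(k2:ℝ)| := by
    rw [e3r, e2r, abs_mul, abs_mul]
    calc |(m:ℝ)| * |(q3:ℝ)| ≤ |(m:ℝ)| * (C * |(q2:ℝ)|) :=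
          mul_le_mul_of_nonneg_left h3 (abs_nonneg _)
      _ = C * (|(m:ℝ)| * |(q2:ℝ)|) := by ring
  set x : ℝ := (k1 : ℝ) with hx
  set y : ℝ := (k2 : ℝ) with hy
  set z : ℝ := (k3 : ℝ) with hz
  set a : ℝ := |x| with ha
  set b : ℝ := |y| with hb
  set c : ℝ := |z| with hc
  have ha0 : 0 ≤ a := abs_nonneg _
  have hb0 : 0 ≤ b := abs_nonneg _
  have hc0 : 0 ≤ c := abs_nonneg _
  have haC : a ≤ C * b := haC'
  have hcC : c ≤ C * b := hcC'
  have sax : a ^ 2 = x ^ 2 := sq_abs x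
  have sby : b ^ 2 = y ^ 2 := sq_abs y
  have scz : c ^ 2 = z ^ 2 := sq_abs z
  have hzne : z ≠ 0 := by rw [hz]; exact_mod_cast hk3
  rw [Mhat1, if_neg hk3]
  push_cast
  have hD : (0 : ℝ) < z ^ 2 * (x ^ 2 + y ^ 2 + z ^ 2) + y ^ 4 := by positivity
  rw [abs_div, abs_of_pos hD, div_le_iff₀ hD]
  have hN : |y * z * (x ^ 2 + y ^ 2 + z ^ 2) - x * y ^ 2 * z|
      ≤ b * c * (a ^ 2 + b ^ 2 + c ^ 2) + a * b ^ 2 * c := by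
    calc |y * z * (x ^ 2 + y ^ 2 + z ^ 2) - x * y ^ 2 * z|
        ≤ |y * z * (x ^ 2 + y ^ 2 + z ^ 2)| + |x * y ^ 2 * z| := abs_sub _ _
      _ = b * c * |x ^ 2 + y ^ 2 + z ^ 2| + a * b ^ 2 * c := by
          rw [abs_mul, abs_mul, abs_mul, abs_mul, abs_pow]
      _ = b * c * (a ^ 2 + b ^ 2 + c ^ 2) + a * b ^ 2 * c := by
          rw [abs_of_nonneg (by positivity : (0:ℝ) ≤ x ^ 2 + y ^ 2 + z ^ 2),
            ← sax, ← sby, ← scz]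
  have hb4 : b ^ 4 ≤ z ^ 2 * (x ^ 2 + y ^ 2 + z ^ 2) + y ^ 4 := by
    have hby : b ^ 4 = y ^ 4 := by
      have h4 : (b ^ 2) ^ 2 = (y ^ 2) ^ 2 := by rw [sby]
      calc b ^ 4 = (b ^ 2) ^ 2 := by ring
        _ = (y ^ 2) ^ 2 := h4
        _ = y ^ 4 := by ring
    have hpos : (0:ℝ) ≤ z ^ 2 * (x ^ 2 + y ^ 2 + z ^ 2) := by positivity
    linarith
  have ha2 : a ^ 2 ≤ (C * b) ^ 2 := pow_le_pow_left₀ ha0 haC 2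
  have hc3 : c ^ 3 ≤ (C * b) ^ 3 := pow_le_pow_left₀ hc0 hcC 3
  have p1 : b * c * a ^ 2 ≤ C ^ 3 * b ^ 4 := by
    calc b * c * a ^ 2 ≤ (b * (C * b)) * (C * b) ^ 2 :=
          mul_le_mul (mul_le_mul_of_nonneg_left hcC hb0) ha2 (sq_nonneg a) (by positivity)
      _ = C ^ 3 * b ^ 4 := by ring
  have p2 : b * c * b ^ 2 ≤ C * b ^ 4 := by
    calc b * c * b ^ 2 ≤ (b * (C * b)) * b ^ 2 :=
          mul_le_mul_of_nonneg_right (mul_le_mul_of_nonneg_left hcC hb0) (sq_nonneg b)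
      _ = C * b ^ 4 := by ring
  have p3 : b * c * c ^ 2 ≤ C ^ 3 * b ^ 4 := by
    calc b * c * c ^ 2 = b * c ^ 3 := by ring
      _ ≤ b * (C * b) ^ 3 := mul_le_mul_of_nonneg_left hc3 hb0
      _ = C ^ 3 * b ^ 4 := by ring
  have p4 : a * b ^ 2 * c ≤ C ^ 2 * b ^ 4 := by
    calc a * b ^ 2 * c ≤ (C * b) * b ^ 2 * (C * b) := by
          apply mul_le_mul (mul_le_mul_of_nonneg_right haC (sq_nonneg b)) hcC hc0
          positivity
      _ = C ^ 2 * b ^ 4 := by ring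
  have hBnn : (0 : ℝ) ≤ C + C ^ 2 + 2 * C ^ 3 := by positivity
  calc |y * z * (x ^ 2 + y ^ 2 + z ^ 2) - x * y ^ 2 * z|
      ≤ b * c * (a ^ 2 + b ^ 2 + c ^ 2) + a * b ^ 2 * c := hN
    _ ≤ (C + C ^ 2 + 2 * C ^ 3) * b ^ 4 := by nlinarith [p1, p2, p3, p4]
    _ ≤ (C + C ^ 2 + 2 * C ^ 3) * (z ^ 2 * (x ^ 2 + y ^ 2 + z ^ 2) + y ^ 4) :=
        mul_le_mul_of_nonneg_left hb4 hBnn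
end

section
/- Let k = (k1, k2, k3) ∈ ℤ³ with k3 ≠ 0, let C > 0 be a real number, and let q = (q1, q2, q3) ∈ ℚ³ \ {0} satisfy |q1| ≤ C·|q2| and |q3| ≤ C·|q2|. If there exists m ∈ ℤ with (k1, k2, k3) = (m·q1, m·q2, m·q3) (as rationals), then |M̂₂(k)| ≤ C + C² + 2C⁴. -/
set_option maxHeartbeats 2000000 in
/-- bound for `M̂₂` on frequency lines in the cone `K_C`. -/
theorem Mhat2_bound_on_line (k1 k2 k3 : ℤ) (hk3 : k3 ≠ 0) (C : ℝ) (hC : 0 < C)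
    (q1 q2 q3 : ℚ) (hq : (q1, q2, q3) ≠ (0, 0, 0))
    (h1 : ((|q1| : ℚ) : ℝ) ≤ C * ((|q2| : ℚ) : ℝ))
    (h3 : ((|q3| : ℚ) : ℝ) ≤ C * ((|q2| : ℚ) : ℝ))
    (hline : ∃ m : ℤ, (k1 : ℚ) = m * q1 ∧ (k2 : ℚ) = m * q2 ∧ (k3 : ℚ) = m * q3) :
    |Mhat2 k1 k2 k3| ≤ C + C ^ 2 + 2 * C ^ 4 := by
  obtain ⟨m, e1, e2, e3⟩ := hline
  -- real versions
  have E1 : (k1 : ℝ) = (m : ℝ) * (q1 : ℝ) := by exact_mod_cast congrArg (Rat.cast (K := ℝ)) e1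
  have E2 : (k2 : ℝ) = (m : ℝ) * (q2 : ℝ) := by exact_mod_cast congrArg (Rat.cast (K := ℝ)) e2
  have E3 : (k3 : ℝ) = (m : ℝ) * (q3 : ℝ) := by exact_mod_cast congrArg (Rat.cast (K := ℝ)) e3
  have h1' : |(q1 : ℝ)| ≤ C * |(q2 : ℝ)| := by push_cast at h1 ⊢; exact h1
  have h3' : |(q3 : ℝ)| ≤ C * |(q2 : ℝ)| := by push_cast at h3 ⊢; exact h3
  set x1 : ℝ := (k1 : ℝ)
  set x2 : ℝ := (k2 : ℝ)
  set x3 : ℝ := (k3 : ℝ)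
  have hA1 : |x1| ≤ C * |x2| := by
    rw [E1, E2, abs_mul, abs_mul, mul_left_comm]
    exact mul_le_mul_of_nonneg_left h1' (abs_nonneg _)
  have hA3 : |x3| ≤ C * |x2| := by
    rw [E3, E2, abs_mul, abs_mul, mul_left_comm]
    exact mul_le_mul_of_nonneg_left h3' (abs_nonneg _)
  have hx3 : x3 ≠ 0 := by
    show (k3 : ℝ) ≠ 0
    exact_mod_cast hk3
  have hD : (0 : ℝ) < x3 ^ 2 * (x1 ^ 2 + x2 ^ 2 + x3 ^ 2) + x2 ^ 4 := by positivity
  rw [Mhat2, if_neg hk3]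
  push_cast
  rw [abs_div, div_le_iff₀ (by rw [abs_of_pos hD]; exact hD)]
  rw [abs_of_pos hD]
  set A1 := |x1|
  set A2 := |x2|
  set A3 := |x3|
  have hs1 : x1 ^ 2 = A1 ^ 2 := (sq_abs x1).symm
  have hs2 : x2 ^ 2 = A2 ^ 2 := (sq_abs x2).symm
  have hs3 : x3 ^ 2 = A3 ^ 2 := (sq_abs x3).symm
  have hn1 : (0:ℝ) ≤ A1 := abs_nonneg _
  have hn2 : (0:ℝ) ≤ A2 := abs_nonneg _
  have hn3 : (0:ℝ) ≤ A3 := abs_nonneg _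
  have htri : |(-(x1 * x3 * (x1 ^ 2 + x2 ^ 2 + x3 ^ 2)) - x2 ^ 3 * x3)|
      ≤ A1 * A3 * (A1 ^ 2 + A2 ^ 2 + A3 ^ 2) + A2 ^ 3 * A3 := by
    calc |(-(x1 * x3 * (x1 ^ 2 + x2 ^ 2 + x3 ^ 2)) - x2 ^ 3 * x3)|
        ≤ |x1 * x3 * (x1 ^ 2 + x2 ^ 2 + x3 ^ 2)| + |x2 ^ 3 * x3| := by
          rw [sub_eq_add_neg, ← abs_neg (x1 * x3 * (x1 ^ 2 + x2 ^ 2 + x3 ^ 2)) ]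
          calc _ ≤ |(-(x1 * x3 * (x1 ^ 2 + x2 ^ 2 + x3 ^ 2)))| + |(-(x2 ^ 3 * x3))| :=
                abs_add_le _ _
            _ = _ := by rw [abs_neg, abs_neg]
      _ = A1 * A3 * (A1 ^ 2 + A2 ^ 2 + A3 ^ 2) + A2 ^ 3 * A3 := by
          rw [abs_mul, abs_mul, abs_mul, abs_pow, abs_of_nonneg (by positivity : (0:ℝ) ≤ x1 ^ 2 + x2 ^ 2 + x3 ^ 2)]
          rw [hs1, hs2, hs3]
  refine htri.trans ?_
  have hs4 : x2 ^ 4 = A2 ^ 4 := by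
    rw [show x2 ^ 4 = (x2 ^ 2) ^ 2 by ring, hs2]; ring
  rw [hs1, hs2, hs3, hs4]
  have hA1sq : A1 ^ 2 ≤ C ^ 2 * A2 ^ 2 := by nlinarith
  have hA3sq : A3 ^ 2 ≤ C ^ 2 * A2 ^ 2 := by nlinarith
  have hS : A1 ^ 2 + A2 ^ 2 + A3 ^ 2 ≤ (1 + 2 * C ^ 2) * A2 ^ 2 := by nlinarith
  have t1 : A1 * A3 ≤ C ^ 2 * A2 ^ 2 := by
    calc A1 * A3 ≤ (C * A2) * (C * A2) :=
          mul_le_mul hA1 hA3 hn3 (by positivity)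
      _ = C ^ 2 * A2 ^ 2 := by ring
  have t2 : A1 * A3 * (A1 ^ 2 + A2 ^ 2 + A3 ^ 2)
      ≤ (C ^ 2 * A2 ^ 2) * ((1 + 2 * C ^ 2) * A2 ^ 2) :=
    mul_le_mul t1 hS (by positivity) (by positivity)
  have t3 : A2 ^ 3 * A3 ≤ A2 ^ 3 * (C * A2) :=
    mul_le_mul_of_nonneg_left hA3 (pow_nonneg hn2 3)
  have key : A1 * A3 * (A1 ^ 2 + A2 ^ 2 + A3 ^ 2) + A2 ^ 3 * A3
      ≤ (C + C ^ 2 + 2 * C ^ 4) * A2 ^ 4 := by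
    have e : (C ^ 2 * A2 ^ 2) * ((1 + 2 * C ^ 2) * A2 ^ 2) + A2 ^ 3 * (C * A2)
        = (C + C ^ 2 + 2 * C ^ 4) * A2 ^ 4 := by ring
    linarith
  refine key.trans ?_
  have hmono : A2 ^ 4 ≤ A3 ^ 2 * (A1 ^ 2 + A2 ^ 2 + A3 ^ 2) + A2 ^ 4 := by
    have : (0:ℝ) ≤ A3 ^ 2 * (A1 ^ 2 + A2 ^ 2 + A3 ^ 2) := by positivity
    linarith
  have hB : (0 : ℝ) < C + C ^ 2 + 2 * C ^ 4 := by positivity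
  exact mul_le_mul_of_nonneg_left hmono hB.le
end

section
/- Let k = (k1, k2, k3) ∈ ℤ³ with k3 ≠ 0, let C > 0 be a real number, and let q = (q1, q2, q3) ∈ ℚ³ \ {0} satisfy |q1| ≤ C·|q2| and |q3| ≤ C·|q2|. If there exists m ∈ ℤ with (k1, k2, k3) = (m·q1, m·q2, m·q3) (as rationals), then 0 ≤ M̂₃(k) ≤ 1 + C². -/
/-- upper bound for `M̂₃` on frequency lines in the cone `K_C`. -/
theorem Mhat3_upper_bound_on_line (k1 k2 k3 : ℤ) (hk3 : k3 ≠ 0) (C : ℝ) (hC : 0 < C)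
    (q1 q2 q3 : ℚ) (hq : (q1, q2, q3) ≠ (0, 0, 0))
    (h1 : ((|q1| : ℚ) : ℝ) ≤ C * ((|q2| : ℚ) : ℝ))
    (h3 : ((|q3| : ℚ) : ℝ) ≤ C * ((|q2| : ℚ) : ℝ))
    (hline : ∃ m : ℤ, (k1 : ℚ) = m * q1 ∧ (k2 : ℚ) = m * q2 ∧ (k3 : ℚ) = m * q3) :
    0 ≤ Mhat3 k1 k2 k3 ∧ Mhat3 k1 k2 k3 ≤ 1 + C ^ 2 := by
  obtain ⟨m, e1, e2, e3⟩ := hline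
  have E1 : (k1:ℝ) = (m:ℝ) * (q1:ℝ) := by exact_mod_cast congrArg (fun x : ℚ => (x:ℝ)) e1
  have E2 : (k2:ℝ) = (m:ℝ) * (q2:ℝ) := by exact_mod_cast congrArg (fun x : ℚ => (x:ℝ)) e2
  push_cast at h1
  have h1' : |(k1:ℝ)| ≤ C * |(k2:ℝ)| := by
    rw [E1, E2, abs_mul, abs_mul]
    calc |(m:ℝ)| * |(q1:ℝ)| ≤ |(m:ℝ)| * (C * |(q2:ℝ)|) :=
          mul_le_mul_of_nonneg_left h1 (abs_nonneg _)
      _ = C * (|(m:ℝ)| * |(q2:ℝ)|) := by ring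
  have key : (k1:ℝ)^2 ≤ C^2 * (k2:ℝ)^2 := by
    have := pow_le_pow_left₀ (abs_nonneg (k1:ℝ)) h1' 2
    rw [sq_abs, mul_pow] at this
    rwa [sq_abs] at this
  have hk3' : (k3:ℝ) ≠ 0 := Int.cast_ne_zero.mpr hk3
  have hk3sq : 0 < (k3:ℝ)^2 := by positivity
  rw [Mhat3, if_neg hk3]
  push_cast
  have hD : 0 < (k3:ℝ)^2 * ((k1:ℝ)^2 + (k2:ℝ)^2 + (k3:ℝ)^2) + (k2:ℝ)^4 := by nlinarith [sq_nonneg (k1:ℝ), sq_nonneg (k2:ℝ)]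
  constructor
  · apply div_nonneg _ hD.le
    positivity
  · rw [div_le_iff₀ hD]
    nlinarith [mul_le_mul_of_nonneg_left key (sq_nonneg (k2:ℝ)), sq_nonneg ((k2:ℝ)^2), sq_nonneg C, sq_nonneg (k1:ℝ), sq_nonneg (k2:ℝ), mul_nonneg (mul_nonneg (sq_nonneg C) (sq_nonneg (k3:ℝ))) (by positivity : (0:ℝ) ≤ (k1:ℝ)^2 + (k2:ℝ)^2 + (k3:ℝ)^2), mul_nonneg (sq_nonneg (k3:ℝ)) (by positivity : (0:ℝ) ≤ (k1:ℝ)^2 + (k2:ℝ)^2 + (k3:ℝ)^2)]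
end

section
/- Let k = (k1, k2, k3) ∈ ℤ³ with k3 ≠ 0, let C > 0 be a real number, and let q = (q1, q2, q3) ∈ ℚ³ \ {0} satisfy |q1| ≤ C·|q2| and |q3| ≤ C·|q2|. If there exists m ∈ ℤ with (k1, k2, k3) = (m·q1, m·q2, m·q3) (as rationals), then M̂₃(k) ≥ 1/(1 + C² + 2C⁴); in particular M̂₃(k) > 0. -/
/-- lower bound for `M̂₃` on frequency lines in the cone `K_C`. -/
theorem Mhat3_lower_bound_on_line (k1 k2 k3 : ℤ) (hk3 : k3 ≠ 0) (C : ℝ) (hC : 0 < C)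
    (q1 q2 q3 : ℚ) (hq : (q1, q2, q3) ≠ (0, 0, 0))
    (h1 : ((|q1| : ℚ) : ℝ) ≤ C * ((|q2| : ℚ) : ℝ))
    (h3 : ((|q3| : ℚ) : ℝ) ≤ C * ((|q2| : ℚ) : ℝ))
    (hline : ∃ m : ℤ, (k1 : ℚ) = m * q1 ∧ (k2 : ℚ) = m * q2 ∧ (k3 : ℚ) = m * q3) :
    1 / (1 + C ^ 2 + 2 * C ^ 4) ≤ Mhat3 k1 k2 k3 ∧ 0 < Mhat3 k1 k2 k3 := by
  obtain ⟨m, hm1, hm2, hm3⟩ := hline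
  set a : ℝ := (k1 : ℝ)
  set b : ℝ := (k2 : ℝ)
  set c : ℝ := (k3 : ℝ)
  -- real versions of the line relations
  have ha : a = (m : ℝ) * (q1 : ℝ) := by
    have := congrArg (fun x : ℚ => (x : ℝ)) hm1; push_cast at this ⊢; exact this
  have hb : b = (m : ℝ) * (q2 : ℝ) := by
    have := congrArg (fun x : ℚ => (x : ℝ)) hm2; push_cast at this ⊢; exact this
  have hc : c = (m : ℝ) * (q3 : ℝ) := by
    have := congrArg (fun x : ℚ => (x : ℝ)) hm3; push_cast at this ⊢; exact this
  have h1' : |(q1 : ℝ)| ≤ C * |(q2 : ℝ)| := by push_cast at h1; exact h1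
  have h3' : |(q3 : ℝ)| ≤ C * |(q2 : ℝ)| := by push_cast at h3; exact h3
  have hAa : |a| ≤ C * |b| := by
    rw [ha, hb, abs_mul, abs_mul]
    calc |(m : ℝ)| * |(q1 : ℝ)| ≤ |(m : ℝ)| * (C * |(q2 : ℝ)|) :=
          mul_le_mul_of_nonneg_left h1' (abs_nonneg _)
      _ = C * (|(m : ℝ)| * |(q2 : ℝ)|) := by ring
  have hAc : |c| ≤ C * |b| := by
    rw [hc, hb, abs_mul, abs_mul]
    calc |(m : ℝ)| * |(q3 : ℝ)| ≤ |(m : ℝ)| * (C * |(q2 : ℝ)|) :=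
          mul_le_mul_of_nonneg_left h3' (abs_nonneg _)
      _ = C * (|(m : ℝ)| * |(q2 : ℝ)|) := by ring
  have hcne : c ≠ 0 := by
    show (k3 : ℝ) ≠ 0
    exact_mod_cast hk3
  have hbne : b ≠ 0 := by
    intro hb0
    apply hcne
    have : C * |b| = 0 := by rw [hb0]; simp
    have : |c| ≤ 0 := this ▸ hAc
    exact abs_eq_zero.mp (le_antisymm this (abs_nonneg _))
  have hb2 : 0 < b ^ 2 := by positivity
  have ha2 : a ^ 2 ≤ C ^ 2 * b ^ 2 := by
    have := pow_le_pow_left₀ (abs_nonneg a) hAa 2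
    rw [sq_abs] at this
    calc a ^ 2 ≤ (C * |b|) ^ 2 := this
      _ = C ^ 2 * b ^ 2 := by rw [mul_pow, sq_abs]
  have hc2 : c ^ 2 ≤ C ^ 2 * b ^ 2 := by
    have := pow_le_pow_left₀ (abs_nonneg c) hAc 2
    rw [sq_abs] at this
    calc c ^ 2 ≤ (C * |b|) ^ 2 := this
      _ = C ^ 2 * b ^ 2 := by rw [mul_pow, sq_abs]
  have hc2pos : 0 < c ^ 2 := by positivity
  have hXpos : (0 : ℝ) < 1 + C ^ 2 + 2 * C ^ 4 := by positivity
  -- unfold Mhat3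
  rw [Mhat3, if_neg hk3]
  have hnum : ((k2 ^ 2 * (k1 ^ 2 + k2 ^ 2) : ℤ) : ℝ) = b ^ 2 * (a ^ 2 + b ^ 2) := by
    push_cast; ring
  have hden : ((k3 ^ 2 * (k1 ^ 2 + k2 ^ 2 + k3 ^ 2) + k2 ^ 4 : ℤ) : ℝ)
      = c ^ 2 * (a ^ 2 + b ^ 2 + c ^ 2) + b ^ 4 := by
    push_cast; ring
  rw [hnum, hden]
  have hdenpos : 0 < c ^ 2 * (a ^ 2 + b ^ 2 + c ^ 2) + b ^ 4 := by positivity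
  have key : 1 / (1 + C ^ 2 + 2 * C ^ 4) ≤
      b ^ 2 * (a ^ 2 + b ^ 2) / (c ^ 2 * (a ^ 2 + b ^ 2 + c ^ 2) + b ^ 4) := by
    rw [div_le_div_iff₀ hXpos hdenpos]
    nlinarith [sq_nonneg a, sq_nonneg (b*b), mul_le_mul ha2 hc2 (le_of_lt hc2pos)
      (by positivity : (0:ℝ) ≤ C ^ 2 * b ^ 2), mul_le_mul_of_nonneg_left ha2
      (le_of_lt hc2pos), mul_le_mul_of_nonneg_left hc2 (le_of_lt hb2),
      mul_le_mul_of_nonneg_left ha2 (le_of_lt hb2)]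
  exact ⟨key, lt_of_lt_of_le (by positivity) key⟩
end

section
/- For every real C > 0 there exist real constants m⋆ and m⋆⋆ with 0 < m⋆ ≤ m⋆⋆, depending only on C, such that for every q ∈ K_C and every k ∈ L(q) with k3 ≠ 0 one has m⋆ ≤ M̂₃(k) ≤ m⋆⋆ (one may take m⋆ = 1/(1 + C² + 2C⁴) and m⋆⋆ = 1 + C²). -/
set_option maxHeartbeats 1000000 in
/-- `M̂₃` is bounded above and below by positive constants, depending only
on `C`, on frequency lines `L(q)` with `q` in the cone `K_C`. -/
theorem Mhat3_equiv_identity_constants (C : ℝ) (hC : 0 < C) :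
    ∃ mlow mhigh : ℝ, 0 < mlow ∧ mlow ≤ mhigh ∧
      ∀ q : ℚ × ℚ × ℚ, Kcone C q → ∀ k : ℤ × ℤ × ℤ, Lline q k → k.2.2 ≠ 0 →
        mlow ≤ Mhat3 k.1 k.2.1 k.2.2 ∧ Mhat3 k.1 k.2.1 k.2.2 ≤ mhigh := by
  refine ⟨1/(1+C^2+2*C^4), 1+C^2, by positivity, ?_, ?_⟩
  · rw [div_le_iff₀ (by positivity)]
    nlinarith [sq_nonneg C, sq_nonneg (C^2), pow_pos hC 4, pow_pos hC 2]
  · rintro ⟨q1, q2, q3⟩ ⟨hq0, hq1, hq3⟩ ⟨k1, k2, k3⟩ ⟨m, h1, h2, h3⟩ hk3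
    simp only at h1 h2 h3 hq1 hq3 hk3 ⊢
    have hm1 : (k1 : ℝ) = (m : ℝ) * (q1 : ℝ) := by exact_mod_cast h1
    have hm2 : (k2 : ℝ) = (m : ℝ) * (q2 : ℝ) := by exact_mod_cast h2
    have hm3 : (k3 : ℝ) = (m : ℝ) * (q3 : ℝ) := by exact_mod_cast h3
    have hq1' : |(q1 : ℝ)| ≤ C * |(q2 : ℝ)| := by push_cast at hq1; exact hq1
    have hq3' : |(q3 : ℝ)| ≤ C * |(q2 : ℝ)| := by push_cast at hq3; exact hq3
    have hA : |(k1 : ℝ)| ≤ C * |(k2 : ℝ)| := by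
      rw [hm1, hm2, abs_mul, abs_mul]
      calc |(m:ℝ)| * |(q1:ℝ)| ≤ |(m:ℝ)| * (C * |(q2:ℝ)|) :=
            mul_le_mul_of_nonneg_left hq1' (abs_nonneg _)
        _ = C * (|(m:ℝ)| * |(q2:ℝ)|) := by ring
    have hB : |(k3 : ℝ)| ≤ C * |(k2 : ℝ)| := by
      rw [hm3, hm2, abs_mul, abs_mul]
      calc |(m:ℝ)| * |(q3:ℝ)| ≤ |(m:ℝ)| * (C * |(q2:ℝ)|) :=
            mul_le_mul_of_nonneg_left hq3' (abs_nonneg _)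
        _ = C * (|(m:ℝ)| * |(q2:ℝ)|) := by ring
    have hc : (k3 : ℝ) ≠ 0 := Int.cast_ne_zero.mpr hk3
    have hb : (k2 : ℝ) ≠ 0 := by
      intro h
      rw [h, abs_zero, mul_zero] at hB
      exact hc (abs_eq_zero.mp (le_antisymm hB (abs_nonneg _)))
    set a : ℝ := (k1 : ℝ) with ha_def
    set b : ℝ := (k2 : ℝ) with hb_def
    set c : ℝ := (k3 : ℝ) with hc_def
    have ha2 : a^2 ≤ C^2 * b^2 := by
      nlinarith [mul_self_le_mul_self (abs_nonneg a) hA, sq_abs a, sq_abs b,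
        abs_nonneg b, abs_nonneg a]
    have hc2 : c^2 ≤ C^2 * b^2 := by
      nlinarith [mul_self_le_mul_self (abs_nonneg c) hB, sq_abs c, sq_abs b,
        abs_nonneg b, abs_nonneg c]
    have hb4 : (0:ℝ) < b^4 := by positivity
    have hc2' : (0:ℝ) < c^2 := by positivity
    have hD : (0:ℝ) < c^2 * (a^2 + b^2 + c^2) + b^4 := by positivity
    unfold Mhat3
    rw [if_neg hk3]
    push_cast
    rw [← ha_def, ← hb_def, ← hc_def]
    constructor
    · rw [div_le_div_iff₀ (by positivity) hD]
      have h1 : c^2*(a^2+b^2+c^2) ≤ C^2*b^2*(a^2+b^2+c^2) :=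
        mul_le_mul_of_nonneg_right hc2 (by positivity)
      have h2 : C^2*b^2*c^2 ≤ C^2*b^2*(C^2*b^2) :=
        mul_le_mul_of_nonneg_left hc2 (by positivity)
      have h3 : (0:ℝ) ≤ C^4*b^4 := by positivity
      have h4 : (0:ℝ) ≤ b^2*a^2 := by positivity
      have h5 : (0:ℝ) ≤ C^4*(b^2*a^2) := by positivity
      linarith [h1, h2, h3, h4, h5]
    · rw [div_le_iff₀ hD]
      have h1 : a^2*b^2 ≤ C^2*b^2*b^2 := mul_le_mul_of_nonneg_right ha2 (sq_nonneg b)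
      have h2 : (0:ℝ) ≤ c^2*(a^2+b^2+c^2) := by positivity
      have h3 : (0:ℝ) ≤ C^2*(c^2*(a^2+b^2+c^2)) := by positivity
      linarith [h1, h2, h3]
end

section
/- For every k = (k1, k2, k3) ∈ ℤ³ with k3 ≠ 0 and every j ∈ {1, 2, 3}, one has |M̂ⱼ(k)| ≤ 2·√(k1² + k2² + k3²); that is, the magneto-geostrophic symbols grow at most linearly in |k|. -/
lemma bound1 (s a1 a2 a3 S : ℝ) (h1 : 0 ≤ a1) (h2 : 0 ≤ a2) (h3 : 1 ≤ a3)
    (hs : 0 ≤ s) (hS : 0 ≤ S) (e1 : a1 ≤ s) (e2 : a2 ≤ s)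
    (q2 : a2 ^ 2 ≤ S) :
    a2 * a3 * S + a1 * a2 ^ 2 * a3 ≤ 2 * s * (a3 ^ 2 * S + a2 ^ 4) := by
  have h3' : 0 ≤ a3 := le_trans zero_le_one h3
  have t1 : a2 * a3 * S ≤ s * (a3 ^ 2 * S) := by
    have : a2 * a3 * S ≤ s * a3 * S :=
      mul_le_mul_of_nonneg_right (mul_le_mul_of_nonneg_right e2 h3') hS
    nlinarith [mul_nonneg (mul_nonneg hs h3') hS]
  have t2 : a1 * a2 ^ 2 * a3 ≤ s * (a3 ^ 2 * S) := by
    have u1 : a1 * a2 ^ 2 * a3 ≤ s * a2 ^ 2 * a3 :=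
      mul_le_mul_of_nonneg_right (mul_le_mul_of_nonneg_right e1 (sq_nonneg a2)) h3'
    have u2 : s * a2 ^ 2 * a3 ≤ s * S * a3 :=
      mul_le_mul_of_nonneg_right (mul_le_mul_of_nonneg_left q2 hs) h3'
    have u3 : s * S * a3 ≤ s * S * (a3 * a3) := by
      nlinarith [mul_nonneg hs hS, mul_nonneg (mul_nonneg hs hS) h3']
    nlinarith
  nlinarith [mul_nonneg hs (pow_le_pow_left₀ h2 e2 4 |>.trans_eq rfl |> fun _ => sq_nonneg (a2^2)), mul_nonneg hs (sq_nonneg (a2^2))]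

lemma bound2 (s a1 a2 a3 S : ℝ) (h1 : 0 ≤ a1) (h2 : 0 ≤ a2) (h3 : 1 ≤ a3)
    (hs : 0 ≤ s) (hS : 0 ≤ S) (e1 : a1 ≤ s) (e2 : a2 ≤ s)
    (q2 : a2 ^ 2 ≤ S) :
    a1 * a3 * S + a2 ^ 3 * a3 ≤ 2 * s * (a3 ^ 2 * S + a2 ^ 4) := by
  have h3' : 0 ≤ a3 := le_trans zero_le_one h3
  have t1 : a1 * a3 * S ≤ s * (a3 ^ 2 * S) := by
    have : a1 * a3 * S ≤ s * a3 * S :=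
      mul_le_mul_of_nonneg_right (mul_le_mul_of_nonneg_right e1 h3') hS
    nlinarith [mul_nonneg (mul_nonneg hs h3') hS]
  have t2 : a2 ^ 3 * a3 ≤ s * (a3 ^ 2 * S) := by
    have u1 : a2 ^ 3 * a3 ≤ s * a2 ^ 2 * a3 := by
      have : a2 ^ 3 = a2 * a2 ^ 2 := by ring
      rw [this]
      exact mul_le_mul_of_nonneg_right (mul_le_mul_of_nonneg_right e2 (sq_nonneg a2)) h3'
    have u2 : s * a2 ^ 2 * a3 ≤ s * S * a3 :=
      mul_le_mul_of_nonneg_right (mul_le_mul_of_nonneg_left q2 hs) h3'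
    have u3 : s * S * a3 ≤ s * S * (a3 * a3) := by
      nlinarith [mul_nonneg hs hS, mul_nonneg (mul_nonneg hs hS) h3']
    nlinarith
  nlinarith [mul_nonneg hs (sq_nonneg (a2 ^ 2))]

lemma bound3 (s a1 a2 a3 S : ℝ) (h2 : 0 ≤ a2) (h3 : 1 ≤ a3)
    (hs : 0 ≤ s) (hS : 0 ≤ S) (hs2 : s ^ 2 = S)
    (q12 : a1 ^ 2 + a2 ^ 2 ≤ S) :
    a2 ^ 2 * (a1 ^ 2 + a2 ^ 2) ≤ 2 * s * (a3 ^ 2 * S + a2 ^ 4) := by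
  have h3' : 0 ≤ a3 := le_trans zero_le_one h3
  have t1 : a2 ^ 2 * (a1 ^ 2 + a2 ^ 2) ≤ a2 ^ 2 * S :=
    mul_le_mul_of_nonneg_left q12 (sq_nonneg a2)
  have amgm : a2 ^ 2 * s ≤ (a2 ^ 4 + S) / 2 := by nlinarith [sq_nonneg (a2 ^ 2 - s)]
  have t2 : a2 ^ 2 * S ≤ s * (a2 ^ 4 + S) / 2 := by
    calc a2 ^ 2 * S = (a2 ^ 2 * s) * s := by rw [← hs2]; ring
      _ ≤ ((a2 ^ 4 + S) / 2) * s := mul_le_mul_of_nonneg_right amgm hs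
      _ = s * (a2 ^ 4 + S) / 2 := by ring
  have h32 : 1 ≤ a3 ^ 2 := by nlinarith
  have t3 : S ≤ a3 ^ 2 * S := by nlinarith [mul_le_mul_of_nonneg_right h32 hS]
  nlinarith [mul_nonneg hs hS, mul_nonneg hs (sq_nonneg (a2 ^ 2)), mul_le_mul_of_nonneg_left t3 hs]




/-- the symbols grow at most linearly in `|k|`. -/
theorem Mhat_linear_growth (k1 k2 k3 : ℤ) (hk3 : k3 ≠ 0) :
    |Mhat1 k1 k2 k3| ≤ 2 * Real.sqrt ((k1 : ℝ) ^ 2 + (k2 : ℝ) ^ 2 + (k3 : ℝ) ^ 2) ∧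
    |Mhat2 k1 k2 k3| ≤ 2 * Real.sqrt ((k1 : ℝ) ^ 2 + (k2 : ℝ) ^ 2 + (k3 : ℝ) ^ 2) ∧
    |Mhat3 k1 k2 k3| ≤ 2 * Real.sqrt ((k1 : ℝ) ^ 2 + (k2 : ℝ) ^ 2 + (k3 : ℝ) ^ 2) := by

  set S : ℝ := (k1 : ℝ) ^ 2 + (k2 : ℝ) ^ 2 + (k3 : ℝ) ^ 2 with hSdef
  set s : ℝ := Real.sqrt S with hsdef
  have hSnn : 0 ≤ S := by positivity
  have hs2 : s ^ 2 = S := Real.sq_sqrt hSnn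
  have hsnn : 0 ≤ s := Real.sqrt_nonneg _
  set a1 : ℝ := |(k1 : ℝ)| with ha1d
  set a2 : ℝ := |(k2 : ℝ)| with ha2d
  set a3 : ℝ := |(k3 : ℝ)| with ha3d
  have ha1nn : 0 ≤ a1 := abs_nonneg _
  have ha2nn : 0 ≤ a2 := abs_nonneg _
  have hsq1 : a1 ^ 2 = (k1 : ℝ) ^ 2 := sq_abs _
  have hsq2 : a2 ^ 2 = (k2 : ℝ) ^ 2 := sq_abs _
  have hsq3 : a3 ^ 2 = (k3 : ℝ) ^ 2 := sq_abs _
  have e1 : a1 ≤ s := by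
    rw [ha1d, ← Real.sqrt_sq_eq_abs]
    exact Real.sqrt_le_sqrt (by nlinarith [sq_nonneg (k2 : ℝ), sq_nonneg (k3 : ℝ)])
  have e2 : a2 ≤ s := by
    rw [ha2d, ← Real.sqrt_sq_eq_abs]
    exact Real.sqrt_le_sqrt (by nlinarith [sq_nonneg (k1 : ℝ), sq_nonneg (k3 : ℝ)])
  have h31 : (1 : ℝ) ≤ a3 := by
    rw [ha3d]
    have h : (1 : ℤ) ≤ |k3| := Int.one_le_abs hk3
    calc (1 : ℝ) = ((1 : ℤ) : ℝ) := by norm_num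
      _ ≤ ((|k3| : ℤ) : ℝ) := by exact_mod_cast h
      _ = |(k3 : ℝ)| := by push_cast; ring
  have q2 : a2 ^ 2 ≤ S := by rw [hsq2]; nlinarith [sq_nonneg (k1 : ℝ), sq_nonneg (k3 : ℝ)]
  have q12 : a1 ^ 2 + a2 ^ 2 ≤ S := by rw [hsq1, hsq2]; nlinarith [sq_nonneg (k3 : ℝ)]
  set D : ℝ := a3 ^ 2 * S + a2 ^ 4 with hDdef
  have hDpos : 0 < D := by
    have hSpos : 0 < S := by
      rw [hSdef]; nlinarith [sq_nonneg (k1 : ℝ), sq_nonneg (k2 : ℝ), hsq3]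
    rw [hDdef]; nlinarith [sq_nonneg (a2 ^ 2), mul_le_mul_of_nonneg_right (one_le_pow₀ h31 (n := 2)) hSpos.le]
  have hDen : ((k3 ^ 2 * (k1 ^ 2 + k2 ^ 2 + k3 ^ 2) + k2 ^ 4 : ℤ) : ℝ) = D := by
    rw [hDdef, hSdef, hsq3]
    have : a2 ^ 4 = (a2 ^ 2) ^ 2 := by ring
    rw [this, hsq2]
    push_cast; ring
  have key : ∀ N : ℝ, |N| ≤ 2 * s * D → |N / D| ≤ 2 * s := fun N hN => by
    rw [abs_div, abs_of_pos hDpos, div_le_iff₀ hDpos]; exact hN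
  refine ⟨?_, ?_, ?_⟩
  · rw [Mhat1, if_neg hk3, hDen]
    apply key
    have hnum : ((k2 * k3 * (k1 ^ 2 + k2 ^ 2 + k3 ^ 2) - k1 * k2 ^ 2 * k3 : ℤ) : ℝ)
        = (k2 : ℝ) * (k3 : ℝ) * S - (k1 : ℝ) * (k2 : ℝ) ^ 2 * (k3 : ℝ) := by
      rw [hSdef]; push_cast; ring
    rw [hnum]
    calc |(k2 : ℝ) * (k3 : ℝ) * S - (k1 : ℝ) * (k2 : ℝ) ^ 2 * (k3 : ℝ)|
        ≤ |(k2 : ℝ) * (k3 : ℝ) * S| + |(k1 : ℝ) * (k2 : ℝ) ^ 2 * (k3 : ℝ)| := abs_sub _ _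
      _ = a2 * a3 * S + a1 * a2 ^ 2 * a3 := by
          rw [abs_mul, abs_mul, abs_mul, abs_mul, abs_of_nonneg hSnn, abs_pow]
      _ ≤ 2 * s * D := bound1 s a1 a2 a3 S ha1nn ha2nn h31 hsnn hSnn e1 e2 q2
  · rw [Mhat2, if_neg hk3, hDen]
    apply key
    have hnum : ((-(k1 * k3 * (k1 ^ 2 + k2 ^ 2 + k3 ^ 2)) - k2 ^ 3 * k3 : ℤ) : ℝ)
        = -((k1 : ℝ) * (k3 : ℝ) * S) - (k2 : ℝ) ^ 3 * (k3 : ℝ) := by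
      rw [hSdef]; push_cast; ring
    rw [hnum]
    calc |-((k1 : ℝ) * (k3 : ℝ) * S) - (k2 : ℝ) ^ 3 * (k3 : ℝ)|
        ≤ |-((k1 : ℝ) * (k3 : ℝ) * S)| + |(k2 : ℝ) ^ 3 * (k3 : ℝ)| := abs_sub _ _
      _ = a1 * a3 * S + a2 ^ 3 * a3 := by
          rw [abs_neg, abs_mul, abs_mul, abs_mul, abs_of_nonneg hSnn, abs_pow]
      _ ≤ 2 * s * D := bound2 s a1 a2 a3 S ha1nn ha2nn h31 hsnn hSnn e1 e2 q2
  · rw [Mhat3, if_neg hk3, hDen]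
    apply key
    have hnum : ((k2 ^ 2 * (k1 ^ 2 + k2 ^ 2) : ℤ) : ℝ)
        = a2 ^ 2 * (a1 ^ 2 + a2 ^ 2) := by
      rw [hsq1, hsq2]; push_cast; ring
    rw [hnum, abs_of_nonneg (by positivity)]
    exact bound3 s a1 a2 a3 S ha2nn h31 hsnn hSnn hs2 q12
end

section
/- There exists a real constant C₀ > 0 such that for every k = (k1, k2, k3) ∈ ℤ³ with k3 ≠ 0 satisfying |k1| ≤ max(|k2|, |k3|), and for every j ∈ {1, 2, 3}, one has |M̂ⱼ(k)| ≤ C₀; that is, on the region of frequency space where |k1| ≤ max(|k2|, |k3|), the magneto-geostrophic symbols are bounded uniformly in |k|. -/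
lemma key1 (A B C : ℝ) (hA : 0 ≤ A) (hB : 0 ≤ B) (hC : 1 ≤ C)
    (h : A ≤ B ∨ A ≤ C) :
    B*C*(A^2+B^2+C^2) + A*B^2*C ≤ 4*(C^2*(A^2+B^2+C^2)+B^4) := by
  have hC0 : 0 ≤ C := by linarith
  have hS : 0 ≤ A^2+B^2+C^2 := by positivity
  have hD : 0 ≤ C^2*(A^2+B^2+C^2) := by positivity
  have hB4 : (0:ℝ) ≤ B^4 := by positivity
  rcases le_total B C with hbc | hbc
  · have hAC : A ≤ C := h.elim (fun h => le_trans h hbc) id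
    have h1 : B*C*(A^2+B^2+C^2) ≤ C*C*(A^2+B^2+C^2) := by gcongr
    have h2 : A*B^2*C ≤ C*C^2*C := by gcongr
    have h3 : C*C^2*C ≤ C^2*(A^2+B^2+C^2) := by
      nlinarith [mul_nonneg (sq_nonneg C) (sq_nonneg A), mul_nonneg (sq_nonneg C) (sq_nonneg B)]
    nlinarith
  · have hAB : A ≤ B := h.elim id (fun h => le_trans h hbc)
    have h1 : B*C*(A^2+B^2+C^2) ≤ B*B*(A^2+B^2+C^2) := by gcongr
    have h2 : B*B*(A^2+B^2+C^2) ≤ 3*B^4 := by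
      nlinarith [mul_nonneg (sq_nonneg B) (sub_nonneg.2 (mul_self_le_mul_self hA hAB)),
        mul_nonneg (sq_nonneg B) (sub_nonneg.2 (mul_self_le_mul_self hC0 hbc))]
    have h3 : A*B^2*C ≤ B*B^2*B := by gcongr
    nlinarith

lemma key2 (A B C : ℝ) (hA : 0 ≤ A) (hB : 0 ≤ B) (hC : 1 ≤ C)
    (h : A ≤ B ∨ A ≤ C) :
    A*C*(A^2+B^2+C^2) + B^3*C ≤ 4*(C^2*(A^2+B^2+C^2)+B^4) := by
  have hC0 : 0 ≤ C := by linarith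
  have hS : 0 ≤ A^2+B^2+C^2 := by positivity
  have hD : 0 ≤ C^2*(A^2+B^2+C^2) := by positivity
  have hB4 : (0:ℝ) ≤ B^4 := by positivity
  rcases le_total B C with hbc | hbc
  · have hAC : A ≤ C := h.elim (fun h => le_trans h hbc) id
    have h1 : A*C*(A^2+B^2+C^2) ≤ C*C*(A^2+B^2+C^2) := by gcongr
    have h2 : B^3*C ≤ C^3*C := by gcongr
    have h3 : C^3*C ≤ C^2*(A^2+B^2+C^2) := by
      nlinarith [mul_nonneg (sq_nonneg C) (sq_nonneg A), mul_nonneg (sq_nonneg C) (sq_nonneg B)]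
    nlinarith
  · have hAB : A ≤ B := h.elim id (fun h => le_trans h hbc)
    have h1 : A*C*(A^2+B^2+C^2) ≤ B*B*(A^2+B^2+C^2) := by gcongr
    have h2 : B*B*(A^2+B^2+C^2) ≤ 3*B^4 := by
      nlinarith [mul_nonneg (sq_nonneg B) (sub_nonneg.2 (mul_self_le_mul_self hA hAB)),
        mul_nonneg (sq_nonneg B) (sub_nonneg.2 (mul_self_le_mul_self hC0 hbc))]
    have h3 : B^3*C ≤ B^3*B := by gcongr
    nlinarith

lemma key3 (A B C : ℝ) (hA : 0 ≤ A) (hB : 0 ≤ B) (hC : 1 ≤ C)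
    (h : A ≤ B ∨ A ≤ C) :
    B^2*(A^2+B^2) ≤ 4*(C^2*(A^2+B^2+C^2)+B^4) := by
  have hC0 : 0 ≤ C := by linarith
  have hD : 0 ≤ C^2*(A^2+B^2+C^2) := by positivity
  rcases h with h | h
  · have : A^2 ≤ B^2 := by nlinarith
    nlinarith [sq_nonneg B, sq_nonneg C, mul_nonneg (sq_nonneg C) (sq_nonneg A),
      mul_nonneg (sq_nonneg C) (sq_nonneg B)]
  · have : A^2 ≤ C^2 := by nlinarith
    nlinarith [sq_nonneg B, mul_nonneg (sq_nonneg C) (sq_nonneg B),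
      mul_nonneg (sq_nonneg B) (sub_nonneg.2 this)]

lemma abs_pow_even4 (y : ℝ) : |y|^4 = y^4 := by
  rw [← abs_pow]; exact abs_of_nonneg (by positivity)

/-- on the region `|k1| ≤ max(|k2|, |k3|)` the symbols are bounded
uniformly in `|k|`. -/
theorem Mhat_bounded_region :
    ∃ C₀ : ℝ, 0 < C₀ ∧ ∀ k1 k2 k3 : ℤ, k3 ≠ 0 → |k1| ≤ max |k2| |k3| →
      |Mhat1 k1 k2 k3| ≤ C₀ ∧ |Mhat2 k1 k2 k3| ≤ C₀ ∧ |Mhat3 k1 k2 k3| ≤ C₀ := by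
  refine ⟨4, by norm_num, ?_⟩
  intro k1 k2 k3 h3 hmax
  set x : ℝ := (k1 : ℝ) with hx
  set y : ℝ := (k2 : ℝ) with hy
  set z : ℝ := (k3 : ℝ) with hz
  have hzne : z ≠ 0 := by simp only [hz, ne_eq, Int.cast_eq_zero]; exact h3
  have hC : 1 ≤ |z| := by
    have h1 : 1 ≤ |k3| := Int.one_le_abs h3
    calc (1:ℝ) ≤ ((|k3| : ℤ) : ℝ) := by exact_mod_cast h1
    _ = |z| := by push_cast; rfl
  have hor : |x| ≤ |y| ∨ |x| ≤ |z| := by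
    rcases le_max_iff.mp hmax with h | h
    · left
      calc |x| = ((|k1| : ℤ) : ℝ) := by push_cast; rfl
      _ ≤ ((|k2| : ℤ) : ℝ) := by exact_mod_cast h
      _ = |y| := by push_cast; rfl
    · right
      calc |x| = ((|k1| : ℤ) : ℝ) := by push_cast; rfl
      _ ≤ ((|k3| : ℤ) : ℝ) := by exact_mod_cast h
      _ = |z| := by push_cast; rfl
  have hS : 0 ≤ x^2 + y^2 + z^2 := by positivity
  have hD : 0 < z^2*(x^2+y^2+z^2)+y^4 := by positivity
  have ex : |x|^2 = x^2 := sq_abs x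
  have ey : |y|^2 = y^2 := sq_abs y
  have ez : |z|^2 = z^2 := sq_abs z
  have ey4 : |y|^4 = y^4 := abs_pow_even4 y
  refine ⟨?_, ?_, ?_⟩
  · rw [Mhat1, if_neg h3]
    push_cast
    rw [← hx, ← hy, ← hz]
    rw [abs_div, abs_of_pos hD, div_le_iff₀ hD]
    have h1 : |y*z*(x^2+y^2+z^2) - x*y^2*z| ≤ |y| * |z| * (x^2+y^2+z^2) + |x| * |y|^2 * |z| := by
      calc |y*z*(x^2+y^2+z^2) - x*y^2*z| ≤ |y*z*(x^2+y^2+z^2)| + |x*y^2*z| := abs_sub _ _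
      _ = |y| * |z| * (x^2+y^2+z^2) + |x| * |y|^2 * |z| := by
          rw [abs_mul, abs_mul, abs_mul, abs_mul, abs_pow, abs_of_nonneg hS]
    rw [ey] at h1
    have h2 := key1 |x| |y| |z| (abs_nonneg _) (abs_nonneg _) hC hor
    rw [ex, ey, ez, ey4] at h2
    linarith
  · rw [Mhat2, if_neg h3]
    push_cast
    rw [← hx, ← hy, ← hz]
    rw [abs_div, abs_of_pos hD, div_le_iff₀ hD]
    have h1 : |(-(x*z*(x^2+y^2+z^2)) - y^3*z)| ≤ |x| * |z| * (x^2+y^2+z^2) + |y|^3 * |z| := by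
      calc |(-(x*z*(x^2+y^2+z^2)) - y^3*z)|
          ≤ |(-(x*z*(x^2+y^2+z^2)))| + |y^3*z| := abs_sub _ _
      _ = |x| * |z| * (x^2+y^2+z^2) + |y|^3 * |z| := by
          rw [abs_neg, abs_mul, abs_mul, abs_mul, abs_pow, abs_of_nonneg hS]
    have h2 := key2 |x| |y| |z| (abs_nonneg _) (abs_nonneg _) hC hor
    rw [ex, ey, ez, ey4] at h2
    linarith
  · rw [Mhat3, if_neg h3]
    push_cast
    rw [← hx, ← hy, ← hz]
    rw [abs_div, abs_of_pos hD, div_le_iff₀ hD]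
    have h2 := key3 |x| |y| |z| (abs_nonneg _) (abs_nonneg _) hC hor
    rw [ex, ey, ez, ey4] at h2
    have h1 : |y^2*(x^2+y^2)| = y^2*(x^2+y^2) := abs_of_nonneg (by positivity)
    linarith
end

section
/- Along the curved frequency region k = (n², n, 1), the first magneto-geostrophic symbol grows like |k1|^{1/2}: the sequence n ↦ M̂₁(n², n, 1)/n converges to 1/2 as n → ∞ (through positive integers n). In particular the symbol M̂₁ is unbounded on ℤ³ ∩ {k3 ≠ 0}. -/
open Filter Topology

lemma Mhat1_eq (n : ℕ) (hn : 1 ≤ n) :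
    Mhat1 ((n : ℤ) ^ 2) (n : ℤ) 1 / (n : ℝ)
      = (1 - 1/(n:ℝ) + (1/(n:ℝ))^2 + (1/(n:ℝ))^4) / (2 + (1/(n:ℝ))^2 + (1/(n:ℝ))^4) := by
  have hn0 : (n : ℝ) ≠ 0 := by positivity
  have hden : (1:ℝ) * (((n:ℝ)^2)^2 + (n:ℝ)^2 + 1^2) + (n:ℝ)^4 ≠ 0 := by positivity
  simp only [Mhat1, if_neg one_ne_zero]
  push_cast
  field_simp
  ring

theorem Mhat1_unbounded' :
    Filter.Tendsto (fun n : ℕ => Mhat1 ((n : ℤ) ^ 2) (n : ℤ) 1 / (n : ℝ))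
      Filter.atTop (nhds (1 / 2)) ∧
    ∀ R : ℝ, ∃ k1 k2 k3 : ℤ, k3 ≠ 0 ∧ R < |Mhat1 k1 k2 k3| := by
  have ht : Tendsto (fun n : ℕ => 1/(n:ℝ)) atTop (nhds 0) :=
    tendsto_one_div_atTop_nhds_zero_nat
  have hmain : Tendsto (fun n : ℕ => Mhat1 ((n : ℤ) ^ 2) (n : ℤ) 1 / (n : ℝ))
      atTop (nhds (1 / 2)) := by
    have h2 : Tendsto (fun n : ℕ =>
        (1 - 1/(n:ℝ) + (1/(n:ℝ))^2 + (1/(n:ℝ))^4) / (2 + (1/(n:ℝ))^2 + (1/(n:ℝ))^4))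
        atTop (nhds (1/2)) := by
      have hnum : Tendsto (fun n : ℕ => 1 - 1/(n:ℝ) + (1/(n:ℝ))^2 + (1/(n:ℝ))^4)
          atTop (nhds 1) := by
        have := (((tendsto_const_nhds (x := (1:ℝ))).sub ht).add (ht.pow 2)).add (ht.pow 4)
        simpa using this
      have hden : Tendsto (fun n : ℕ => 2 + (1/(n:ℝ))^2 + (1/(n:ℝ))^4)
          atTop (nhds 2) := by
        have := ((tendsto_const_nhds (x := (2:ℝ))).add (ht.pow 2)).add (ht.pow 4)
        simpa using this
      exact hnum.div hden (by norm_num)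
    refine h2.congr' ?_
    filter_upwards [eventually_ge_atTop 1] with n hn
    exact (Mhat1_eq n hn).symm
  refine ⟨hmain, fun R => ?_⟩
  have hatTop : Tendsto (fun n : ℕ => Mhat1 ((n : ℤ) ^ 2) (n : ℤ) 1) atTop atTop := by
    have := hmain.pos_mul_atTop (C := 1/2) (by norm_num) tendsto_natCast_atTop_atTop
    refine this.congr' ?_
    filter_upwards [eventually_ge_atTop 1] with n hn
    have hn0 : (n : ℝ) ≠ 0 := by positivity
    field_simp
  obtain ⟨n, hn⟩ := (hatTop.eventually (eventually_gt_atTop R)).exists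
  exact ⟨(n : ℤ)^2, (n : ℤ), 1, one_ne_zero, hn.trans_le (le_abs_self _)⟩

/-- along `k = (n², n, 1)` the symbol `M̂₁` grows like `|k1|^{1/2}`:
`M̂₁(n², n, 1)/n → 1/2`; in particular `M̂₁` is unbounded on `ℤ³ ∩ {k3 ≠ 0}`. -/
theorem Mhat1_unbounded :
    Filter.Tendsto (fun n : ℕ => Mhat1 ((n : ℤ) ^ 2) (n : ℤ) 1 / (n : ℝ))
      Filter.atTop (nhds (1 / 2)) ∧
    ∀ R : ℝ, ∃ k1 k2 k3 : ℤ, k3 ≠ 0 ∧ R < |Mhat1 k1 k2 k3| := by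
  exact Mhat1_unbounded'
end

section
/- Along the curved frequency region k = (n², n, 1), the second magneto-geostrophic symbol grows like |k1|: the sequence n ↦ M̂₂(n², n, 1)/n² converges to −1/2 as n → ∞ (through positive integers n). In particular |M̂₂(n², n, 1)| → ∞, so the symbol M̂₂ is unbounded on ℤ³ ∩ {k3 ≠ 0}. -/

lemma Mhat2_eq (n : ℕ) (hn : 1 ≤ n) :
    Mhat2 ((n : ℤ) ^ 2) (n : ℤ) 1 / (n : ℝ) ^ 2 =
      -(1 + (n : ℝ)⁻¹ ^ 2 + (n : ℝ)⁻¹ ^ 4 + (n : ℝ)⁻¹ ^ 3) /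
        (2 + (n : ℝ)⁻¹ ^ 2 + (n : ℝ)⁻¹ ^ 4) := by
  have hx : (n : ℝ) ≠ 0 := by positivity
  have hD : (2 + (n : ℝ)⁻¹ ^ 2 + (n : ℝ)⁻¹ ^ 4) ≠ 0 := by positivity
  have hD2 : ((1:ℝ) ^ 2 * (((n:ℝ)^2) ^ 2 + (n:ℝ) ^ 2 + 1 ^ 2) + (n:ℝ) ^ 4) ≠ 0 := by
    positivity
  rw [Mhat2]
  simp only [one_ne_zero, if_false]
  push_cast
  field_simp
  ring

theorem Mhat2_tendsto :
    Filter.Tendsto (fun n : ℕ => Mhat2 ((n : ℤ) ^ 2) (n : ℤ) 1 / (n : ℝ) ^ 2)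
      Filter.atTop (nhds (-(1 / 2))) := by
  have hinv : Filter.Tendsto (fun n : ℕ => ((n : ℝ))⁻¹) Filter.atTop (nhds 0) :=
    tendsto_inv_atTop_zero.comp tendsto_natCast_atTop_atTop
  have hnum : Filter.Tendsto
      (fun n : ℕ => -(1 + (n : ℝ)⁻¹ ^ 2 + (n : ℝ)⁻¹ ^ 4 + (n : ℝ)⁻¹ ^ 3))
      Filter.atTop (nhds (-(1 + 0 ^ 2 + 0 ^ 4 + 0 ^ 3))) := by
    exact (((tendsto_const_nhds.add (hinv.pow 2)).add (hinv.pow 4)).add (hinv.pow 3)).neg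
  have hden : Filter.Tendsto
      (fun n : ℕ => 2 + (n : ℝ)⁻¹ ^ 2 + (n : ℝ)⁻¹ ^ 4)
      Filter.atTop (nhds (2 + 0 ^ 2 + 0 ^ 4)) := by
    exact (tendsto_const_nhds.add (hinv.pow 2)).add (hinv.pow 4)
  have h := hnum.div hden (by norm_num)
  norm_num at h
  refine h.congr' ?_
  filter_upwards [Filter.eventually_ge_atTop 1] with n hn
  rw [Mhat2_eq n hn]
  simp only [Pi.div_apply, ← inv_pow]
  ring

/-- along `k = (n², n, 1)` the symbol `M̂₂` grows like `|k1|`: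
`M̂₂(n², n, 1)/n² → -1/2`, so `|M̂₂(n², n, 1)| → ∞` and `M̂₂` is unbounded on
`ℤ³ ∩ {k3 ≠ 0}`. -/
theorem Mhat2_unbounded :
    Filter.Tendsto (fun n : ℕ => Mhat2 ((n : ℤ) ^ 2) (n : ℤ) 1 / (n : ℝ) ^ 2)
      Filter.atTop (nhds (-(1 / 2))) ∧
    Filter.Tendsto (fun n : ℕ => |Mhat2 ((n : ℤ) ^ 2) (n : ℤ) 1|)
      Filter.atTop Filter.atTop ∧
    ∀ R : ℝ, ∃ k1 k2 k3 : ℤ, k3 ≠ 0 ∧ R < |Mhat2 k1 k2 k3| := by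
  have h1 := Mhat2_tendsto
  have h2 : Filter.Tendsto (fun n : ℕ => |Mhat2 ((n : ℤ) ^ 2) (n : ℤ) 1|)
      Filter.atTop Filter.atTop := by
    have habs : Filter.Tendsto
        (fun n : ℕ => |Mhat2 ((n : ℤ) ^ 2) (n : ℤ) 1 / (n : ℝ) ^ 2|)
        Filter.atTop (nhds |(-(1 / 2) : ℝ)|) := h1.abs
    have hsq : Filter.Tendsto (fun n : ℕ => ((n : ℝ)) ^ 2) Filter.atTop Filter.atTop :=
      (Filter.tendsto_pow_atTop (by norm_num)).comp tendsto_natCast_atTop_atTop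
    have := habs.pos_mul_atTop (by norm_num) hsq
    refine this.congr' ?_
    filter_upwards [Filter.eventually_ge_atTop 1] with n hn
    have hx : ((n : ℝ)) ^ 2 ≠ 0 := by
      have : (n : ℝ) ≠ 0 := Nat.cast_ne_zero.mpr (by omega)
      positivity
    rw [abs_div, abs_of_nonneg (by positivity : (0:ℝ) ≤ (n:ℝ)^2),
      div_mul_cancel₀ _ hx]
  refine ⟨h1, h2, fun R => ?_⟩
  obtain ⟨n, hn⟩ := (h2.eventually (Filter.eventually_gt_atTop R)).exists
  exact ⟨(n : ℤ) ^ 2, (n : ℤ), 1, one_ne_zero, hn⟩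
end

section
/- Along the curved frequency region k = (n², n, 1), the third magneto-geostrophic symbol grows like |k1|^{2·(1/2)}: the sequence n ↦ M̂₃(n², n, 1)/n² converges to 1/2 as n → ∞ (through positive integers n). In particular M̂₃ is unbounded on ℤ³ ∩ {k3 ≠ 0}. -/
/-- along `k = (n², n, 1)` the symbol `M̂₃` grows like `|k1|^{2·(1/2)}`:
`M̂₃(n², n, 1)/n² → 1/2`; in particular `M̂₃` is unbounded on `ℤ³ ∩ {k3 ≠ 0}`. -/
theorem Mhat3_unbounded :
    Filter.Tendsto (fun n : ℕ => Mhat3 ((n : ℤ) ^ 2) (n : ℤ) 1 / (n : ℝ) ^ 2)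
      Filter.atTop (nhds (1 / 2)) ∧
    ∀ R : ℝ, ∃ k1 k2 k3 : ℤ, k3 ≠ 0 ∧ R < |Mhat3 k1 k2 k3| := by
  have h0 : Filter.Tendsto (fun n : ℕ => ((n:ℝ))⁻¹) Filter.atTop (nhds 0) :=
    tendsto_inv_atTop_zero.comp tendsto_natCast_atTop_atTop
  have hg : Filter.Tendsto
      (fun n : ℕ => (1 + ((n:ℝ)⁻¹)^2) / (2 + ((n:ℝ)⁻¹)^2 + ((n:ℝ)⁻¹)^4))
      Filter.atTop (nhds (1/2)) := by
    have hnum : Filter.Tendsto (fun n : ℕ => 1 + ((n:ℝ)⁻¹)^2) Filter.atTop (nhds 1) := by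
      have := (h0.pow 2).const_add (1:ℝ)
      simpa using this
    have hden : Filter.Tendsto (fun n : ℕ => 2 + ((n:ℝ)⁻¹)^2 + ((n:ℝ)⁻¹)^4)
        Filter.atTop (nhds 2) := by
      have := ((h0.pow 2).const_add (2:ℝ)).add (h0.pow 4)
      simpa using this
    have := hnum.div hden (by norm_num)
    exact this
  have heq : ∀ n : ℕ, 1 ≤ n →
      Mhat3 ((n : ℤ) ^ 2) (n : ℤ) 1 / (n : ℝ) ^ 2
        = (1 + ((n:ℝ)⁻¹)^2) / (2 + ((n:ℝ)⁻¹)^2 + ((n:ℝ)⁻¹)^4) := by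
    intro n hn
    have hn1 : (1:ℝ) ≤ (n:ℝ) := by exact_mod_cast hn
    have hn0 : (n:ℝ) ≠ 0 := by positivity
    have hD : (2 + ((n:ℝ)⁻¹)^2 + ((n:ℝ)⁻¹)^4) ≠ 0 := by positivity
    simp only [Mhat3, if_neg one_ne_zero]
    push_cast
    have hB : ((1:ℝ)^2 * (((n:ℝ)^2)^2 + (n:ℝ)^2 + 1^2) + (n:ℝ)^4) ≠ 0 := by positivity
    field_simp
    ring
  have key : Filter.Tendsto (fun n : ℕ => Mhat3 ((n : ℤ) ^ 2) (n : ℤ) 1 / (n : ℝ) ^ 2)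
      Filter.atTop (nhds (1 / 2)) := by
    refine hg.congr' ?_
    filter_upwards [Filter.eventually_ge_atTop 1] with n hn
    exact (heq n hn).symm
  refine ⟨key, fun R => ?_⟩
  have hsq : Filter.Tendsto (fun n : ℕ => ((n:ℝ))^2) Filter.atTop Filter.atTop :=
by
    refine Filter.tendsto_atTop_mono (fun n => ?_) tendsto_natCast_atTop_atTop
    exact_mod_cast Nat.le_self_pow (by norm_num) n
  have hat : Filter.Tendsto (fun n : ℕ => Mhat3 ((n : ℤ) ^ 2) (n : ℤ) 1 / (n : ℝ) ^ 2 * (n:ℝ)^2)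
      Filter.atTop Filter.atTop :=
    Filter.Tendsto.pos_mul_atTop (by norm_num) key hsq
  have hat2 : Filter.Tendsto (fun n : ℕ => Mhat3 ((n : ℤ) ^ 2) (n : ℤ) 1)
      Filter.atTop Filter.atTop := by
    refine hat.congr' ?_
    filter_upwards [Filter.eventually_ge_atTop 1] with n hn
    have hn0 : ((n:ℝ)^2) ≠ 0 := by
      have : (1:ℝ) ≤ (n:ℝ) := by exact_mod_cast hn
      positivity
    rw [div_mul_cancel₀ _ hn0]
  obtain ⟨n, hn⟩ := (hat2.eventually_gt_atTop R).exists
  exact ⟨(n:ℤ)^2, n, 1, one_ne_zero, lt_of_lt_of_le hn (le_abs_self _)⟩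
end

section
/- Let C > 0, q ∈ K_C, and let a : ℤ³ → ℂ be a function whose support is contained in L(q) ∩ {k : k3 ≠ 0} and which is square-summable, i.e. ∑ₖ |a(k)|² < ∞. Then (1/(1 + C² + 2C⁴))² · ∑ₖ |a(k)|² ≤ ∑ₖ |M̂₃(k)·a(k)|² ≤ (1 + C²)² · ∑ₖ |a(k)|²; that is, the Fourier multiplier with symbol M̂₃ is equivalent to the identity operator in ℓ² on functions with frequency support in L(q). -/
/-- Pointwise bounds on the symbol `M̂₃` on the cone. -/
lemma Mhat3_bounds (C : ℝ) (hC : 0 < C) (k1 k2 k3 : ℤ) (h3 : k3 ≠ 0)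
    (h1 : |(k1:ℝ)| ≤ C * |(k2:ℝ)|) (h3b : |(k3:ℝ)| ≤ C * |(k2:ℝ)|) :
    1/(1+C^2+2*C^4) ≤ Mhat3 k1 k2 k3 ∧ Mhat3 k1 k2 k3 ≤ 1 + C^2 := by
  have hz : ((k3:ℝ)) ≠ 0 := Int.cast_ne_zero.mpr h3
  set x := (k1:ℝ); set y := (k2:ℝ); set z := (k3:ℝ)
  have hz2 : 0 < z^2 := by
    have := abs_pos.mpr hz
    calc (0:ℝ) < |z|^2 := by positivity
    _ = z^2 := sq_abs z
  have h1sq : x^2 ≤ C^2 * y^2 := by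
    have := pow_le_pow_left₀ (abs_nonneg x) h1 2
    rw [sq_abs, mul_pow] at this
    rw [sq_abs] at this; exact this
  have h3sq : z^2 ≤ C^2 * y^2 := by
    have := pow_le_pow_left₀ (abs_nonneg z) h3b 2
    rw [sq_abs, mul_pow] at this
    rw [sq_abs] at this; exact this
  have hD : 0 < z^2*(x^2+y^2+z^2)+y^4 := by nlinarith [sq_nonneg x, sq_nonneg y]
  have hS : (0:ℝ) < 1+C^2+2*C^4 := by positivity
  rw [Mhat3, if_neg h3]
  push_cast
  constructor
  · rw [div_le_div_iff₀ hS hD]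
    nlinarith [mul_le_mul h3sq h3sq (sq_nonneg z) (by positivity : (0:ℝ) ≤ C^2*y^2),
      mul_le_mul_of_nonneg_right h3sq (sq_nonneg x),
      mul_le_mul_of_nonneg_right h3sq (sq_nonneg y),
      mul_nonneg (sq_nonneg y) (sq_nonneg x),
      mul_nonneg (mul_nonneg (sq_nonneg C) (sq_nonneg C)) (mul_nonneg (sq_nonneg y) (sq_nonneg x)),
      sq_nonneg (C*y)]
  · rw [div_le_iff₀ hD]
    nlinarith [mul_le_mul_of_nonneg_left h1sq (sq_nonneg y),
      mul_nonneg hz2.le (by positivity : (0:ℝ) ≤ x^2+y^2+z^2),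
      sq_nonneg C, mul_nonneg (sq_nonneg C) (mul_nonneg hz2.le (by positivity : (0:ℝ) ≤ x^2+y^2+z^2))]

/-- the Fourier multiplier with symbol `M̂₃` is equivalent to the
identity operator in `ℓ²` on functions with frequency support in `L(q) ∩ {k3 ≠ 0}`,
with `q` in the cone `K_C`. -/
theorem Mhat3_multiplier_equiv_identity (C : ℝ) (hC : 0 < C)
    (q : ℚ × ℚ × ℚ) (hq : Kcone C q) (a : ℤ × ℤ × ℤ → ℂ)
    (hsupp : ∀ k : ℤ × ℤ × ℤ, a k ≠ 0 → Lline q k ∧ k.2.2 ≠ 0)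
    (hsum : Summable fun k : ℤ × ℤ × ℤ => ‖a k‖ ^ 2) :
    (1 / (1 + C ^ 2 + 2 * C ^ 4)) ^ 2 * ∑' k : ℤ × ℤ × ℤ, ‖a k‖ ^ 2 ≤
        ∑' k : ℤ × ℤ × ℤ, ‖((Mhat3 k.1 k.2.1 k.2.2 : ℝ) : ℂ) * a k‖ ^ 2 ∧
    ∑' k : ℤ × ℤ × ℤ, ‖((Mhat3 k.1 k.2.1 k.2.2 : ℝ) : ℂ) * a k‖ ^ 2 ≤
        (1 + C ^ 2) ^ 2 * ∑' k : ℤ × ℤ × ℤ, ‖a k‖ ^ 2 := by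
  obtain ⟨hq0, hq1, hq3⟩ := hq
  have hS : (0:ℝ) < 1+C^2+2*C^4 := by positivity
  set c : ℝ := 1 / (1+C^2+2*C^4) with hc_def
  have hc : 0 < c := by positivity
  -- q2 ≠ 0
  have hq2 : q.2.1 ≠ 0 := by
    intro h
    apply hq0
    have h1 : ((|q.1| : ℚ) : ℝ) ≤ 0 := by simpa [h] using hq1
    have h3 : ((|q.2.2| : ℚ) : ℝ) ≤ 0 := by simpa [h] using hq3
    have hq1' : q.1 = 0 := by
      have : |q.1| ≤ 0 := by exact_mod_cast h1
      simpa using abs_nonpos_iff.mp (by exact_mod_cast this)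
    have hq3' : q.2.2 = 0 := by
      have : |q.2.2| ≤ 0 := by exact_mod_cast h3
      simpa using abs_nonpos_iff.mp (by exact_mod_cast this)
    exact Prod.ext hq1' (Prod.ext h hq3')
  -- pointwise bounds
  have hpt : ∀ k : ℤ × ℤ × ℤ,
      c^2 * ‖a k‖^2 ≤ ‖((Mhat3 k.1 k.2.1 k.2.2 : ℝ) : ℂ) * a k‖^2 ∧
      ‖((Mhat3 k.1 k.2.1 k.2.2 : ℝ) : ℂ) * a k‖^2 ≤ (1+C^2)^2 * ‖a k‖^2 := by
    intro k
    by_cases ha : a k = 0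
    · simp [ha]
    obtain ⟨⟨m, hm1, hm2, hm3⟩, h3⟩ := hsupp k ha
    -- bounds on |k1|, |k3| in ℝ
    have habs1 : |(k.1:ℝ)| ≤ C * |(k.2.1:ℝ)| := by
      have e1 : (k.1:ℝ) = (m:ℝ) * ((q.1:ℚ):ℝ) := by exact_mod_cast congrArg (Rat.cast (K := ℝ)) hm1
      have e2 : (k.2.1:ℝ) = (m:ℝ) * ((q.2.1:ℚ):ℝ) := by exact_mod_cast congrArg (Rat.cast (K := ℝ)) hm2
      rw [e1, e2, abs_mul, abs_mul]
      calc |(m:ℝ)| * |((q.1:ℚ):ℝ)| ≤ |(m:ℝ)| * (C * |((q.2.1:ℚ):ℝ)|) := by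
            apply mul_le_mul_of_nonneg_left _ (abs_nonneg _)
            simpa [Rat.cast_abs] using hq1
        _ = C * (|(m:ℝ)| * |((q.2.1:ℚ):ℝ)|) := by ring
    have habs3 : |(k.2.2:ℝ)| ≤ C * |(k.2.1:ℝ)| := by
      have e1 : (k.2.2:ℝ) = (m:ℝ) * ((q.2.2:ℚ):ℝ) := by exact_mod_cast congrArg (Rat.cast (K := ℝ)) hm3
      have e2 : (k.2.1:ℝ) = (m:ℝ) * ((q.2.1:ℚ):ℝ) := by exact_mod_cast congrArg (Rat.cast (K := ℝ)) hm2
      rw [e1, e2, abs_mul, abs_mul]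
      calc |(m:ℝ)| * |((q.2.2:ℚ):ℝ)| ≤ |(m:ℝ)| * (C * |((q.2.1:ℚ):ℝ)|) := by
            apply mul_le_mul_of_nonneg_left _ (abs_nonneg _)
            simpa [Rat.cast_abs] using hq3
        _ = C * (|(m:ℝ)| * |((q.2.1:ℚ):ℝ)|) := by ring
    obtain ⟨hlo, hhi⟩ := Mhat3_bounds C hC k.1 k.2.1 k.2.2 h3 habs1 habs3
    have hM0 : 0 ≤ Mhat3 k.1 k.2.1 k.2.2 := le_trans hc.le hlo
    have hnorm : ‖((Mhat3 k.1 k.2.1 k.2.2 : ℝ) : ℂ) * a k‖^2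
        = (Mhat3 k.1 k.2.1 k.2.2)^2 * ‖a k‖^2 := by
      rw [norm_mul, Complex.norm_real, mul_pow, Real.norm_eq_abs, sq_abs]
    rw [hnorm]
    constructor
    · apply mul_le_mul_of_nonneg_right _ (by positivity)
      exact pow_le_pow_left₀ hc.le hlo 2
    · apply mul_le_mul_of_nonneg_right _ (by positivity)
      exact pow_le_pow_left₀ hM0 hhi 2
  -- summability of the multiplied series
  have hgsum : Summable fun k : ℤ × ℤ × ℤ => ‖((Mhat3 k.1 k.2.1 k.2.2 : ℝ) : ℂ) * a k‖^2 := by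
    apply Summable.of_nonneg_of_le (fun k => by positivity) (fun k => (hpt k).2)
    exact hsum.mul_left _
  constructor
  · rw [← tsum_mul_left]
    exact Summable.tsum_le_tsum (fun k => (hpt k).1) (hsum.mul_left _) hgsum
  · calc ∑' k : ℤ × ℤ × ℤ, ‖((Mhat3 k.1 k.2.1 k.2.2 : ℝ) : ℂ) * a k‖^2
        ≤ ∑' k : ℤ × ℤ × ℤ, (1+C^2)^2 * ‖a k‖^2 :=
          Summable.tsum_le_tsum (fun k => (hpt k).2) hgsum (hsum.mul_left _)
      _ = (1+C^2)^2 * ∑' k : ℤ × ℤ × ℤ, ‖a k‖^2 := tsum_mul_left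
end

section
/- Let C > 0, q ∈ K_C, t ≥ 0, let w : ℤ³ → [0, ∞) be any weight function, and let a : ℤ³ → ℂ have support contained in L(q) ∩ {k : k3 ≠ 0} with ∑ₖ w(k)·|a(k)|² < ∞. Then ∑ₖ w(k)·|exp(−M̂₃(k)·t)·a(k)|² ≤ exp(−2t/(1 + C² + 2C⁴)) · ∑ₖ w(k)·|a(k)|²; that is, the Fourier coefficients of the solution of the linearized non-diffusive MG equation ∂ₜθ = −M₃[θ] with frequency support in L(q) decay exponentially in every weighted ℓ² norm, with rate m⋆ = 1/(1 + C² + 2C⁴). -/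
/-- the linear semigroup `e^{-M₃ t}` decays exponentially, with rate
`m⋆ = 1/(1 + C² + 2C⁴)`, in every weighted `ℓ²` norm, for data with frequency support
in `L(q) ∩ {k3 ≠ 0}` with `q` in the cone `K_C`. -/
theorem linear_semigroup_exponential_decay (C : ℝ) (hC : 0 < C)
    (q : ℚ × ℚ × ℚ) (hq : Kcone C q) (t : ℝ) (ht : 0 ≤ t)
    (w : ℤ × ℤ × ℤ → ℝ) (hw : ∀ k, 0 ≤ w k) (a : ℤ × ℤ × ℤ → ℂ)
    (hsupp : ∀ k : ℤ × ℤ × ℤ, a k ≠ 0 → Lline q k ∧ k.2.2 ≠ 0)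
    (hsum : Summable fun k : ℤ × ℤ × ℤ => w k * ‖a k‖ ^ 2) :
    ∑' k : ℤ × ℤ × ℤ,
        w k * ‖((Real.exp (-(Mhat3 k.1 k.2.1 k.2.2) * t) : ℝ) : ℂ) * a k‖ ^ 2 ≤
      Real.exp (-2 * t / (1 + C ^ 2 + 2 * C ^ 4)) *
        ∑' k : ℤ × ℤ × ℤ, w k * ‖a k‖ ^ 2 := by
  set B : ℝ := 1 + C ^ 2 + 2 * C ^ 4 with hB
  have hBpos : 0 < B := by positivity
  have key : ∀ k : ℤ × ℤ × ℤ, a k ≠ 0 → B⁻¹ ≤ Mhat3 k.1 k.2.1 k.2.2 := by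
    rintro ⟨k1, k2, k3⟩ hk
    obtain ⟨⟨m, h1, h2, h3⟩, hk3⟩ := hsupp _ hk
    simp only at h1 h2 h3 hk3 ⊢
    have r1 : (k1 : ℝ) = (m : ℝ) * ((q.1 : ℚ) : ℝ) := by exact_mod_cast congrArg (fun x : ℚ => (x : ℝ)) h1
    have r2 : (k2 : ℝ) = (m : ℝ) * ((q.2.1 : ℚ) : ℝ) := by exact_mod_cast congrArg (fun x : ℚ => (x : ℝ)) h2
    have r3 : (k3 : ℝ) = (m : ℝ) * ((q.2.2 : ℚ) : ℝ) := by exact_mod_cast congrArg (fun x : ℚ => (x : ℝ)) h3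
    have hq1 : |((q.1 : ℚ) : ℝ)| ≤ C * |((q.2.1 : ℚ) : ℝ)| := by
      have := hq.2.1; push_cast at this; exact this
    have hq3 : |((q.2.2 : ℚ) : ℝ)| ≤ C * |((q.2.1 : ℚ) : ℝ)| := by
      have := hq.2.2; push_cast at this; exact this
    have hx : |(k1 : ℝ)| ≤ C * |(k2 : ℝ)| := by
      rw [r1, r2, abs_mul, abs_mul]
      calc |(m : ℝ)| * |((q.1 : ℚ) : ℝ)| ≤ |(m : ℝ)| * (C * |((q.2.1 : ℚ) : ℝ)|) :=
            mul_le_mul_of_nonneg_left hq1 (abs_nonneg _)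
        _ = C * (|(m : ℝ)| * |((q.2.1 : ℚ) : ℝ)|) := by ring
    have hz : |(k3 : ℝ)| ≤ C * |(k2 : ℝ)| := by
      rw [r3, r2, abs_mul, abs_mul]
      calc |(m : ℝ)| * |((q.2.2 : ℚ) : ℝ)| ≤ |(m : ℝ)| * (C * |((q.2.1 : ℚ) : ℝ)|) :=
            mul_le_mul_of_nonneg_left hq3 (abs_nonneg _)
        _ = C * (|(m : ℝ)| * |((q.2.1 : ℚ) : ℝ)|) := by ring
    have hx2 : (k1 : ℝ) ^ 2 ≤ C ^ 2 * (k2 : ℝ) ^ 2 := by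
      have := mul_self_le_mul_self (abs_nonneg (k1 : ℝ)) hx
      nlinarith [sq_abs (k1 : ℝ), sq_abs (k2 : ℝ)]
    have hz2 : (k3 : ℝ) ^ 2 ≤ C ^ 2 * (k2 : ℝ) ^ 2 := by
      have := mul_self_le_mul_self (abs_nonneg (k3 : ℝ)) hz
      nlinarith [sq_abs (k3 : ℝ), sq_abs (k2 : ℝ)]
    have hk3R : (k3 : ℝ) ≠ 0 := by exact_mod_cast hk3
    have hk2R : (k2 : ℝ) ≠ 0 := by
      intro h
      apply hk3R
      have : |(k3 : ℝ)| ≤ 0 := by rw [h] at hz; simpa using hz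
      simpa [abs_nonpos_iff] using this
    rw [Mhat3, if_neg hk3]
    push_cast
    have hDpos : (0:ℝ) < (k3:ℝ) ^ 2 * ((k1:ℝ) ^ 2 + (k2:ℝ) ^ 2 + (k3:ℝ) ^ 2) + (k2:ℝ) ^ 4 := by
      have h3 : (0:ℝ) < (k3:ℝ) ^ 2 := by positivity
      nlinarith [sq_nonneg (k1:ℝ), sq_nonneg (k2:ℝ), sq_nonneg ((k2:ℝ)^2)]
    rw [le_div_iff₀ hDpos, inv_mul_eq_div, div_le_iff₀ hBpos]
    have hk2sq : (0:ℝ) < (k2:ℝ) ^ 2 := by positivity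
    nlinarith [mul_le_mul hz2 hx2 (sq_nonneg (k1:ℝ)) (by positivity : (0:ℝ) ≤ C ^ 2 * (k2:ℝ) ^ 2),
      mul_le_mul hz2 hz2 (sq_nonneg (k3:ℝ)) (by positivity : (0:ℝ) ≤ C ^ 2 * (k2:ℝ) ^ 2),
      mul_le_mul_of_nonneg_right hz2 (sq_nonneg (k2:ℝ)),
      mul_nonneg hBpos.le (mul_nonneg (sq_nonneg (k2:ℝ)) (sq_nonneg (k1:ℝ))),
      sq_nonneg ((k2:ℝ)^2), mul_pos hk2sq hk2sq]
  have hle : ∀ k : ℤ × ℤ × ℤ,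
      w k * ‖((Real.exp (-(Mhat3 k.1 k.2.1 k.2.2) * t) : ℝ) : ℂ) * a k‖ ^ 2 ≤
        Real.exp (-2 * t / B) * (w k * ‖a k‖ ^ 2) := by
    intro k
    by_cases hk : a k = 0
    · simp [hk]
    · have hM := key k hk
      rw [norm_mul, Complex.norm_real, Real.norm_eq_abs,
        abs_of_pos (Real.exp_pos _), mul_pow]
      have hexp : Real.exp (-(Mhat3 k.1 k.2.1 k.2.2) * t) ^ 2 ≤ Real.exp (-2 * t / B) := by
        have : Real.exp (-(Mhat3 k.1 k.2.1 k.2.2) * t) ^ 2 =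
            Real.exp (2 * (-(Mhat3 k.1 k.2.1 k.2.2) * t)) := by
          rw [sq, ← Real.exp_add]; ring_nf
        rw [this]
        apply Real.exp_le_exp.mpr
        rw [div_eq_mul_inv]
        nlinarith [mul_nonneg (sub_nonneg.mpr hM) ht]
      calc w k * (Real.exp (-(Mhat3 k.1 k.2.1 k.2.2) * t) ^ 2 * ‖a k‖ ^ 2) ≤
            w k * (Real.exp (-2 * t / B) * ‖a k‖ ^ 2) := by
            apply mul_le_mul_of_nonneg_left _ (hw k)
            exact mul_le_mul_of_nonneg_right hexp (sq_nonneg _)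
        _ = Real.exp (-2 * t / B) * (w k * ‖a k‖ ^ 2) := by ring
  have hg : Summable fun k : ℤ × ℤ × ℤ => Real.exp (-2 * t / B) * (w k * ‖a k‖ ^ 2) :=
    hsum.mul_left _
  have hf : Summable fun k : ℤ × ℤ × ℤ =>
      w k * ‖((Real.exp (-(Mhat3 k.1 k.2.1 k.2.2) * t) : ℝ) : ℂ) * a k‖ ^ 2 := by
    apply Summable.of_nonneg_of_le (fun k => mul_nonneg (hw k) (sq_nonneg _)) hle hg
  calc (∑' k : ℤ × ℤ × ℤ,
        w k * ‖((Real.exp (-(Mhat3 k.1 k.2.1 k.2.2) * t) : ℝ) : ℂ) * a k‖ ^ 2) ≤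
      ∑' k : ℤ × ℤ × ℤ, Real.exp (-2 * t / B) * (w k * ‖a k‖ ^ 2) :=
        Summable.tsum_le_tsum hle hf hg
    _ = Real.exp (-2 * t / B) * ∑' k : ℤ × ℤ × ℤ, w k * ‖a k‖ ^ 2 := tsum_mul_left
end
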